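/- Let n₁, …, n_M be unit vectors in ℝ² such that ⟨n_i, Ω⟩ > 0 for all i, where Ω is a fixed unit vector. Then all n_i lie in the open half-plane {v : ⟨v, Ω⟩ > 0}, and the total winding of the sequence n₁ → n₂ → ⋯ → n_M → n₁, computed as the sum of oriented angles from n_i to n_{i+1} chosen in (−π, π), equals 0 (in particular it cannot equal 2π). -/

import Mathlib

/-!
Identify `ℝ²` with `ℂ` and measure every vector `v` by its angle `θ v ∈ (-π, π]` from `Ω`, the
argument of `conj Ω * v`. On the open half-plane `⟨v, Ω⟩ > 0` this angle lies in `(-π/2, π/2)`,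
so the increment `θ (n (i+1)) - θ (n i)` lies in `(-π, π)` and agrees with `φ i` modulo `2π`;
hence the two are equal. The winding is then the telescoping sum `θ (n M) - θ (n 0) = 0`.
-/

/-- Counterclockwise rotation of the plane by angle `α`. -/
noncomputable def rot (α : ℝ) (v : ℝ × ℝ) : ℝ × ℝ :=
  (Real.cos α * v.1 - Real.sin α * v.2, Real.sin α * v.1 + Real.cos α * v.2)

/-- Euclidean inner product on `ℝ²`. -/
def dot2 (u v : ℝ × ℝ) : ℝ := u.1 * v.1 + u.2 * v.2

open Complex ComplexConjugate Real

def toComplex (v : ℝ × ℝ) : ℂ := ⟨v.1, v.2⟩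

lemma toComplex_rot (α : ℝ) (v : ℝ × ℝ) :
    toComplex (rot α v) = exp (α * I) * toComplex v := by
  rw [exp_mul_I]
  apply Complex.ext
  · simp [toComplex, rot, cos_ofReal_re, sin_ofReal_re]
  · simp [toComplex, rot, cos_ofReal_re, sin_ofReal_re]
    ring

/-- The oriented angle from `Ω` to `v`, in `(-π, π]`. -/
noncomputable def angleFrom (Ω v : ℝ × ℝ) : ℝ := arg (conj (toComplex Ω) * toComplex v)

lemma re_conj_mul_toComplex (Ω v : ℝ × ℝ) :
    (conj (toComplex Ω) * toComplex v).re = dot2 v Ω := by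
  simp only [mul_re, conj_re, conj_im, toComplex, dot2]
  ring

lemma abs_angleFrom_lt_pi_div_two {Ω v : ℝ × ℝ} (hv : 0 < dot2 v Ω) :
    |angleFrom Ω v| < π / 2 :=
  abs_arg_lt_pi_div_two_iff.mpr (Or.inl (by rwa [re_conj_mul_toComplex]))

lemma angleFrom_rot_coe_angle {Ω v : ℝ × ℝ} (hv : 0 < dot2 v Ω) {α : ℝ}
    (hα : α ∈ Set.Ioc (-π) π) :
    (angleFrom Ω (rot α v) : Real.Angle) = α + angleFrom Ω v := by
  have hz : conj (toComplex Ω) * toComplex v ≠ 0 := fun h => by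
    simp [← re_conj_mul_toComplex, h] at hv
  rw [angleFrom, toComplex_rot, mul_left_comm, arg_mul_coe_angle (exp_ne_zero _) hz, exp_mul_I,
    arg_cos_add_sin_mul_I hα, angleFrom]

lemma Real.Angle.eq_of_coe_eq_of_mem_Ioc {a b : ℝ} (h : (a : Real.Angle) = b)
    (ha : a ∈ Set.Ioc (-π) π) (hb : b ∈ Set.Ioc (-π) π) : a = b := by
  rw [← Real.Angle.toReal_coe_eq_self_iff_mem_Ioc.mpr ha, h,
    Real.Angle.toReal_coe_eq_self_iff_mem_Ioc.mpr hb]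

lemma eq_angleFrom_rot_sub {Ω v : ℝ × ℝ} {α : ℝ} (hα : -π < α ∧ α < π)
    (hv : 0 < dot2 v Ω) (hw : 0 < dot2 (rot α v) Ω) :
    α = angleFrom Ω (rot α v) - angleFrom Ω v := by
  have hαIoc : α ∈ Set.Ioc (-π) π := ⟨hα.1, hα.2.le⟩
  apply Real.Angle.eq_of_coe_eq_of_mem_Ioc _ hαIoc
  · have := abs_lt.mp (abs_angleFrom_lt_pi_div_two hv)
    have := abs_lt.mp (abs_angleFrom_lt_pi_div_two hw)
    constructor <;> linarith
  · rw [Real.Angle.coe_sub, angleFrom_rot_coe_angle hv hαIoc]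
    abel

theorem winding_in_half_plane_zero_general (M : ℕ)
    (n : ℕ → ℝ × ℝ) (φ : ℕ → ℝ) (Ω : ℝ × ℝ)
    (hclosed : n M = n 0)
    (hφ : ∀ i < M, -Real.pi < φ i ∧ φ i < Real.pi)
    (hrot : ∀ i < M, n (i + 1) = rot (φ i) (n i))
    (hpos : ∀ i < M, 0 < dot2 (n i) Ω) :
    (∀ i < M, n i ∈ {v : ℝ × ℝ | 0 < dot2 v Ω}) ∧
      (∑ i ∈ Finset.range M, φ i) = 0 := by
  refine ⟨hpos, ?_⟩
  have hpos_succ : ∀ i < M, 0 < dot2 (n (i + 1)) Ω := fun i hi => by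
    rcases Nat.lt_or_ge (i + 1) M with h | h
    · exact hpos _ h
    · rw [show i + 1 = M by omega, hclosed]
      exact hpos 0 (by omega)
  have hstep : ∀ i ∈ Finset.range M, φ i = angleFrom Ω (n (i + 1)) - angleFrom Ω (n i) :=
    fun i hi => by
      have hi := Finset.mem_range.mp hi
      have hw := hpos_succ i hi
      rw [hrot i hi] at hw ⊢
      exact eq_angleFrom_rot_sub (hφ i hi) (hpos i hi) hw
  rw [Finset.sum_congr rfl hstep, Finset.sum_range_sub (fun i => angleFrom Ω (n i)), hclosed,
    sub_self]

/-- Unit vectors `n 0, …, n (M-1)` all lying in the open half-plane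
`{v : ⟨v, Ω⟩ > 0}` determined by a unit vector `Ω` (we set `n M = n 0` to close
the cycle), with oriented angles `φ i ∈ (−π, π)` from `n i` to `n (i+1)`: then
the total winding `∑ φ i` equals `0` (in particular it cannot be `2π`). -/
theorem winding_in_half_plane_zero (M : ℕ) (hM : 0 < M)
    (n : ℕ → ℝ × ℝ) (φ : ℕ → ℝ) (Ω : ℝ × ℝ)
    (hΩ : dot2 Ω Ω = 1)
    (hunit : ∀ i < M, dot2 (n i) (n i) = 1)
    (hclosed : n M = n 0)
    (hφ : ∀ i < M, -Real.pi < φ i ∧ φ i < Real.pi)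
    (hrot : ∀ i < M, n (i + 1) = rot (φ i) (n i))
    (hpos : ∀ i < M, 0 < dot2 (n i) Ω) :
    (∀ i < M, n i ∈ {v : ℝ × ℝ | 0 < dot2 v Ω}) ∧
      (∑ i ∈ Finset.range M, φ i) = 0 :=
  winding_in_half_plane_zero_general M n φ Ω hclosed hφ hrot hpos
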